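/- arXiv:2110.03549 — 3 statements merged into one kernel-verified Lean document; each statement's English description precedes it below -/
import Mathlib

section
/- With the notation of the Gumbel-Softmax estimator, for f : [0,1] → ℝ continuously differentiable, lim_{τ → 0+} ∫_0^1 f'(v) p_z(η - τ logit(v)) dv = (f(1) - f(0)) · p_z(η), i.e., the Gumbel-Softmax estimator is asymptotically unbiased as the temperature τ → 0. -/
open Real MeasureTheory Filter Topology intervalIntegral

noncomputable def pz (t : ℝ) : ℝ := exp (-t) / (1 + exp (-t))^2

noncomputable def logit (v : ℝ) : ℝ := Real.log (v / (1 - v))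

/-!
As `τ → 0` the weight `pz (η - τ * logit v)` tends to `pz η` at every `v ∈ (0, 1)` and stays
bounded by `1`, so dominated convergence (with dominating function `|f'|`) moves the limit inside
the integral, and the fundamental theorem of calculus evaluates `∫₀¹ f' = f 1 - f 0`.
-/

lemma continuous_pz : Continuous pz :=
  Continuous.div (by fun_prop) (by fun_prop) fun t => by positivity

lemma abs_pz_le_one (t : ℝ) : |pz t| ≤ 1 := by
  have hpos : 0 < (1 + exp (-t)) ^ 2 := by positivity
  rw [abs_of_nonneg (by unfold pz; positivity), pz, div_le_one hpos]
  nlinarith [exp_pos (-t)]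

lemma measurable_logit : Measurable logit :=
  (measurable_id.div (measurable_const.sub measurable_id)).log

theorem tendsto_integral_mul_comp_sub_mul {g φ L : ℝ → ℝ} {a b η C : ℝ}
    (hg : IntervalIntegrable g volume a b) (hφ : Continuous φ) (hφC : ∀ t, |φ t| ≤ C)
    (hL : Measurable L) :
    Tendsto (fun τ : ℝ => ∫ v in a..b, g v * φ (η - τ * L v)) (𝓝 0)
      (𝓝 ((∫ v in a..b, g v) * φ η)) := by
  rw [← intervalIntegral.integral_mul_const]
  refine tendsto_integral_filter_of_dominated_convergence (fun v => |g v| * C)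
    (Eventually.of_forall fun τ => ?_) (Eventually.of_forall fun τ => ?_) (hg.abs.mul_const C)
    (ae_of_all _ fun v _ => ?_)
  · exact hg.def'.aestronglyMeasurable.mul
      (hφ.measurable.comp (measurable_const.sub (hL.const_mul τ))).aestronglyMeasurable
  · refine ae_of_all _ fun v _ => ?_
    rw [norm_mul, Real.norm_eq_abs, Real.norm_eq_abs]
    exact mul_le_mul_of_nonneg_left (hφC _) (abs_nonneg _)
  · have hlim : Tendsto (fun τ : ℝ => η - τ * L v) (𝓝 0) (𝓝 η) := by
      simpa using (tendsto_const_nhds (x := η)).sub ((tendsto_id (x := 𝓝 (0:ℝ))).mul_const (L v))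
    exact ((hφ.tendsto η).comp hlim).const_mul (g v)

/-- On the interior of `[a, b]`, `deriv f` agrees with the continuous `derivWithin f (Icc a b)`. -/
lemma ContDiffOn.intervalIntegrable_deriv {f : ℝ → ℝ} {a b : ℝ}
    (hf : ContDiffOn ℝ 1 f (Set.Icc a b)) (hab : a < b) :
    IntervalIntegrable (deriv f) volume a b := by
  have hcont : ContinuousOn (derivWithin f (Set.Icc a b)) (Set.Icc a b) :=
    hf.continuousOn_derivWithin (uniqueDiffOn_Icc hab) le_rfl
  rw [intervalIntegrable_iff_integrableOn_Ioo_of_le hab.le]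
  refine ((hcont.integrableOn_Icc).mono_set Set.Ioo_subset_Icc_self).congr_fun
    (fun x hx => derivWithin_of_mem_nhds (Icc_mem_nhds hx.1 hx.2)) measurableSet_Ioo

/-- the Gumbel-Softmax estimator is asymptotically unbiased as `τ → 0+`. -/
theorem gs_asymptotically_unbiased
    (f : ℝ → ℝ) (hf : ContDiffOn ℝ 1 f (Set.Icc 0 1)) (η : ℝ) :
    Tendsto (fun τ : ℝ => ∫ v in (0:ℝ)..1, deriv f v * pz (η - τ * logit v))
      (𝓝[>] 0) (𝓝 ((f 1 - f 0) * pz η)) := by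
  rw [← integral_deriv_of_contDiffOn_Icc hf zero_le_one]
  exact (tendsto_integral_mul_comp_sub_mul (hf.intervalIntegrable_deriv one_pos) continuous_pz
    abs_pz_le_one measurable_logit).mono_left nhdsWithin_le_nhds
end

section
/- The second moment of the Gumbel-Softmax gradient estimator satisfies E[ĝ²_{GS(τ)}] = (1/τ) ∫_0^1 f'(v)² v(1-v) p_z(η - τ logit(v)) dv, where the expectation is over standard logistic z and ĝ_{GS(τ)} = f'(σ_τ(η-z))·σ_τ(η-z)(1-σ_τ(η-z))/τ. -/
open Real MeasureTheory intervalIntegral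

noncomputable def sigTau (τ t : ℝ) : ℝ := 1 / (1 + exp (-t / τ))

/-! The map `z ↦ σ_τ(η - z)` is a smooth decreasing bijection of `ℝ` onto `(0, 1)` with
`|d/dz σ_τ(η - z)| = σ_τ(1 - σ_τ)/τ` and inverse `v ↦ η - τ logit v`. Substituting `v = σ_τ(η - z)`
absorbs one factor `σ_τ(1 - σ_τ)/τ` of the squared estimator into `dv`, leaving
`f'(v)² · v(1 - v)/τ · p_z(z)` with `z = η - τ logit v`. The change-of-variables formula
`integral_image_eq_integral_abs_deriv_smul` needs no integrability, so the identity also holds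
when both sides are non-integrable (and hence `0`). -/

section sigTau

variable {τ t : ℝ}

lemma sigTau_pos : 0 < sigTau τ t := by
  unfold sigTau; positivity

lemma one_sub_sigTau : 1 - sigTau τ t = exp (-t / τ) / (1 + exp (-t / τ)) := by
  unfold sigTau
  field_simp
  ring

lemma sigTau_lt_one : sigTau τ t < 1 := by
  have : 0 < 1 - sigTau τ t := by rw [one_sub_sigTau]; positivity
  linarith

lemma logit_sigTau : logit (sigTau τ t) = t / τ := by
  have hratio : sigTau τ t / (1 - sigTau τ t) = exp (t / τ) := by
    rw [one_sub_sigTau, sigTau, neg_div, exp_neg]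
    field_simp
  rw [logit, hratio, log_exp]

lemma sigTau_mul_logit (hτ : τ ≠ 0) {v : ℝ} (hv : v ∈ Set.Ioo 0 1) :
    sigTau τ (τ * logit v) = v := by
  obtain ⟨hv0, hv1⟩ := hv
  have hexp : exp (-(τ * logit v) / τ) = (1 - v) / v := by
    rw [neg_div, mul_div_cancel_left₀ _ hτ, logit, exp_neg,
      exp_log (div_pos hv0 (by linarith)), inv_div]
  rw [sigTau, hexp]
  field_simp
  ring

lemma range_sigTau (hτ : τ ≠ 0) : Set.range (sigTau τ) = Set.Ioo 0 1 :=
  Set.Subset.antisymm (Set.range_subset_iff.2 fun _ => ⟨sigTau_pos, sigTau_lt_one⟩)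
    fun v hv => ⟨τ * logit v, sigTau_mul_logit hτ hv⟩

lemma hasDerivAt_sigTau (τ t : ℝ) :
    HasDerivAt (sigTau τ) (sigTau τ t * (1 - sigTau τ t) / τ) t := by
  have hden : HasDerivAt (fun s => 1 + exp (-s / τ)) (exp (-t / τ) * (-1 / τ)) t :=
    (((hasDerivAt_neg t).div_const τ).exp).const_add 1
  have hpos : 0 < 1 + exp (-t / τ) := by positivity
  refine ((hasDerivAt_const t (1 : ℝ)).div hden hpos.ne').congr_deriv ?_
  rw [one_sub_sigTau, sigTau]
  field_simp
  ring

lemma strictMono_sigTau (hτ : 0 < τ) : StrictMono (sigTau τ) := by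
  intro a b hab
  unfold sigTau
  gcongr

end sigTau

lemma integral_sigTau_sub_mul_comp {τ : ℝ} (hτ : 0 < τ) (η : ℝ) (F : ℝ → ℝ) :
    ∫ z : ℝ, sigTau τ (η - z) * (1 - sigTau τ (η - z)) / τ * F (sigTau τ (η - z))
      = ∫ v in (0 : ℝ)..1, F v := by
  set φ : ℝ → ℝ := fun z => sigTau τ (η - z)
  have hφ' : ∀ z, HasDerivAt φ (-(φ z * (1 - φ z) / τ)) z := fun z =>
    (hasDerivAt_sigTau τ (η - z)).comp_const_sub η z
  have hinj : Function.Injective φ :=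
    (strictMono_sigTau hτ).injective.comp fun _ _ h => by simpa using h
  have himage : φ '' Set.univ = Set.Ioo 0 1 := by
    rw [Set.image_univ, ← range_sigTau hτ.ne']
    exact Function.Surjective.range_comp (f := (η - ·)) (fun v => ⟨η - v, sub_sub_cancel η v⟩)
      (sigTau τ)
  have hcov := integral_image_eq_integral_abs_deriv_smul MeasurableSet.univ
    (fun z _ => (hφ' z).hasDerivWithinAt) hinj.injOn F
  rw [himage, Measure.restrict_univ] at hcov
  have habs : ∀ z, |-(φ z * (1 - φ z) / τ)| = φ z * (1 - φ z) / τ := fun z => by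
    have : 0 < 1 - φ z := sub_pos.2 sigTau_lt_one
    rw [abs_neg, abs_of_pos (div_pos (mul_pos sigTau_pos this) hτ)]
  simp only [habs, smul_eq_mul] at hcov
  rw [← hcov, intervalIntegral.integral_of_le zero_le_one, integral_Ioc_eq_integral_Ioo]

theorem gs_second_moment_general
    (f : ℝ → ℝ)
    (η τ : ℝ) (hτ : 0 < τ) :
    (∫ z : ℝ, (deriv f (sigTau τ (η - z)) * (sigTau τ (η - z) * (1 - sigTau τ (η - z)) / τ))^2 * pz z)
      = (1 / τ) * ∫ v in (0:ℝ)..1, (deriv f v)^2 * (v * (1 - v)) * pz (η - τ * logit v) := by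
  rw [← intervalIntegral.integral_const_mul, ← integral_sigTau_sub_mul_comp hτ η]
  refine integral_congr_ae (Filter.Eventually.of_forall fun z => ?_)
  have hinverse : η - τ * logit (sigTau τ (η - z)) = z := by
    rw [logit_sigTau, mul_div_cancel₀ _ hτ.ne']
    ring
  simp only [hinverse]
  ring

/-- second moment of the Gumbel-Softmax gradient estimator. -/
theorem gs_second_moment
    (f : ℝ → ℝ) (hf : ContDiffOn ℝ 1 f (Set.Icc 0 1))
    (η τ : ℝ) (hτ : 0 < τ) :
    (∫ z : ℝ, (deriv f (sigTau τ (η - z)) * (sigTau τ (η - z) * (1 - sigTau τ (η - z)) / τ))^2 * pz z)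
      = (1 / τ) * ∫ v in (0:ℝ)..1, (deriv f v)^2 * (v * (1 - v)) * pz (η - τ * logit v) :=
  gs_second_moment_general f η τ hτ
end

section
/- There exist a differentiable function f and p ∈ (0,1) such that the DARN estimator has strictly larger bias than the straight-through estimator: for f smooth with f'(-1) = -1, f'(1) = 1, f(1)-f(-1) = 2a with a = 0.9, and p = 0.95, the ST estimator expectation 2((1-p)f'(-1) + p f'(1)) = 2(2p-1) equals the true gradient 2a exactly (bias 0), while the DARN expectation f'(1)+f'(-1) = 0 has bias 2a = 1.8. -/
/-!
The straight-through expectation `2((1-p) f'(-1) + p f'(1)) = 2(2p-1)` and the DARN expectation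
`f'(1) + f'(-1) = 0` only see the slopes `f'(±1) = ±1`, whereas the true gradient `f(1) - f(-1)`
is free. The cubic `x²/2 + (a/2)(3x - x³)` has these slopes and `f(1) - f(-1) = 2a`; for
`p = (1 + a)/2` the ST estimator is exact and the DARN estimator is off by `2a`.
-/

noncomputable def biasWitness (a x : ℝ) : ℝ :=
  x ^ 2 / 2 + a / 2 * (3 * x - x ^ 3)

theorem hasDerivAt_biasWitness (a x : ℝ) :
    HasDerivAt (biasWitness a) (x + 3 * a / 2 * (1 - x ^ 2)) x := by
  refine (((hasDerivAt_pow 2 x).div_const 2).add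
    ((((hasDerivAt_id x).const_mul 3).sub (hasDerivAt_pow 3 x)).const_mul (a / 2))).congr_deriv ?_
  norm_num
  ring

theorem differentiable_biasWitness (a : ℝ) : Differentiable ℝ (biasWitness a) :=
  fun x => (hasDerivAt_biasWitness a x).differentiableAt

theorem deriv_biasWitness_neg_one (a : ℝ) : deriv (biasWitness a) (-1) = -1 := by
  rw [(hasDerivAt_biasWitness a (-1)).deriv]
  ring

theorem deriv_biasWitness_one (a : ℝ) : deriv (biasWitness a) 1 = 1 := by
  rw [(hasDerivAt_biasWitness a 1).deriv]
  ring

theorem biasWitness_one_sub_neg_one (a : ℝ) :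
    biasWitness a 1 - biasWitness a (-1) = 2 * a := by
  simp only [biasWitness]
  ring

/-- there exist a differentiable `f` and `p ∈ (0,1)` (namely with
`f'(-1) = -1`, `f'(1) = 1`, `f(1)-f(-1) = 2·0.9`, `p = 0.95`) for which the ST
estimator is exactly unbiased while the DARN estimator has bias `1.8`. -/
theorem darn_can_have_larger_bias_than_st :
    ∃ f : ℝ → ℝ, Differentiable ℝ f ∧
      deriv f (-1) = -1 ∧ deriv f 1 = 1 ∧ f 1 - f (-1) = 2 * (9/10) ∧
      ∃ p : ℝ, p ∈ Set.Ioo (0:ℝ) 1 ∧ p = 19/20 ∧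
        |2 * ((1 - p) * deriv f (-1) + p * deriv f 1) - (f 1 - f (-1))| = 0 ∧
        |(deriv f 1 + deriv f (-1)) - (f 1 - f (-1))| = 2 * (9/10) ∧
        |(deriv f 1 + deriv f (-1)) - (f 1 - f (-1))|
          > |2 * ((1 - p) * deriv f (-1) + p * deriv f 1) - (f 1 - f (-1))| := by
  have slope_neg := deriv_biasWitness_neg_one (9/10)
  have slope_pos := deriv_biasWitness_one (9/10)
  have gap := biasWitness_one_sub_neg_one (9/10)
  refine ⟨biasWitness (9/10), differentiable_biasWitness _, slope_neg, slope_pos, gap,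
    19/20, ⟨by norm_num, by norm_num⟩, rfl, ?_, ?_, ?_⟩ <;>
  · rw [slope_neg, slope_pos, gap]
    norm_num
end
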